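/- arXiv:1610.02611 — 3 statements merged into one kernel-verified Lean document; each statement's English description precedes it below -/
import Mathlib

section
/- For every natural number n ≥ 1, the function w ↦ (n+1)² w^n / a_n(w)², where a_n(w) = Σ_{k=0}^n w^k, is strictly decreasing on the interval (1, ∞). -/
open Finset

/-- `aP k w = ∑_{j=0}^k w^j` -/
noncomputable def aP (k : ℕ) (w : ℝ) : ℝ := ∑ j ∈ range (k + 1), w ^ j

/-!
Since `aₙ` is palindromic, `wⁿ aₙ(1/w) = aₙ(w)`, so the function equals
`(n+1)² / (aₙ(w) aₙ(1/w))`. Expanding and symmetrising,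
`2 aₙ(w) aₙ(1/w) = ∑_{j,k ≤ n} (w^(j-k) + w^(k-j))`, and each summand `u + u⁻¹` with
`u = w^|j-k| ≥ 1` increases with `w > 1`, strictly when `j ≠ k`.
-/

open Set

lemma add_inv_lt_add_inv {x y : ℝ} (hx : 1 ≤ x) (hxy : x < y) : x + x⁻¹ < y + y⁻¹ := by
  have hx0 : 0 < x := by linarith
  have hy0 : 0 < y := by linarith
  have hxy1 : 0 < x * y - 1 := by nlinarith
  have hdiff : y + y⁻¹ - (x + x⁻¹) = (y - x) * (x * y - 1) / (x * y) := by
    field_simp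
    ring
  have : 0 < (y - x) * (x * y - 1) / (x * y) := by
    have := sub_pos.2 hxy
    positivity
  linarith

lemma strictMonoOn_zpow_add_zpow_neg {e : ℤ} (he : e ≠ 0) :
    StrictMonoOn (fun w : ℝ => w ^ e + w ^ (-e)) (Ioi 1) := by
  wlog he_pos : 0 < e generalizing e
  · have h := this (neg_ne_zero.2 he) (by omega)
    simp only [neg_neg] at h
    simpa only [add_comm] using h
  intro x hx y hy hxy
  simp only [zpow_neg]
  exact add_inv_lt_add_inv (one_le_zpow₀ (le_of_lt hx) he_pos.le)
    (zpow_lt_zpow_left₀ he_pos (by linarith [mem_Ioi.1 hx]) hxy)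

lemma monotoneOn_zpow_add_zpow_neg (e : ℤ) :
    MonotoneOn (fun w : ℝ => w ^ e + w ^ (-e)) (Ioi 1) := by
  rcases eq_or_ne e 0 with rfl | he
  · simp [monotoneOn_const]
  · exact (strictMonoOn_zpow_add_zpow_neg he).monotoneOn

lemma two_mul_aP_mul_aP_inv (n : ℕ) {w : ℝ} (hw : w ≠ 0) :
    2 * (aP n w * aP n w⁻¹) =
      ∑ j ∈ range (n + 1), ∑ k ∈ range (n + 1), (w ^ ((j : ℤ) - k) + w ^ (-((j : ℤ) - k))) := by
  have hprod : aP n w * aP n w⁻¹ = ∑ j ∈ range (n + 1), ∑ k ∈ range (n + 1), w ^ ((j : ℤ) - k) := by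
    simp only [aP, sum_mul_sum, zpow_sub₀ hw, zpow_natCast, inv_pow, div_eq_mul_inv]
  simp only [sum_add_distrib, neg_sub]
  conv_rhs => arg 2; rw [sum_comm]
  rw [← hprod]
  ring

lemma strictMonoOn_aP_mul_aP_inv {n : ℕ} (hn : 1 ≤ n) :
    StrictMonoOn (fun w => aP n w * aP n w⁻¹) (Ioi 1) := by
  intro x hx y hy hxy
  have hx0 : x ≠ 0 := by linarith [mem_Ioi.1 hx]
  have hy0 : y ≠ 0 := by linarith [mem_Ioi.1 hy]
  suffices 2 * (aP n x * aP n x⁻¹) < 2 * (aP n y * aP n y⁻¹) by linarith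
  rw [two_mul_aP_mul_aP_inv n hx0, two_mul_aP_mul_aP_inv n hy0]
  have hle (j k : ℕ) := monotoneOn_zpow_add_zpow_neg ((j : ℤ) - k) hx hy hxy.le
  refine sum_lt_sum (fun j _ => sum_le_sum fun k _ => hle j k)
    ⟨1, mem_range.2 (by omega), sum_lt_sum (fun k _ => hle 1 k) ⟨0, mem_range.2 (by omega), ?_⟩⟩
  exact strictMonoOn_zpow_add_zpow_neg (by norm_num) hx hy hxy

lemma pow_mul_aP_inv (n : ℕ) {w : ℝ} (hw : w ≠ 0) : w ^ n * aP n w⁻¹ = aP n w := by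
  rw [aP, mul_sum, aP, ← sum_range_reflect]
  refine sum_congr rfl fun k hk => ?_
  have hk : k ≤ n := Nat.lt_succ_iff.1 (mem_range.1 hk)
  rw [inv_pow, ← div_eq_mul_inv, div_eq_iff (pow_ne_zero _ hw), ← pow_add]
  congr 1
  omega

lemma aP_pos (n : ℕ) {w : ℝ} (hw : 0 < w) : 0 < aP n w :=
  sum_pos (fun j _ => pow_pos hw j) ⟨0, by simp⟩

lemma pow_div_aP_sq (n : ℕ) {w : ℝ} (hw : 0 < w) :
    w ^ n / aP n w ^ 2 = (aP n w * aP n w⁻¹)⁻¹ := by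
  have ha := (aP_pos n hw).ne'
  rw [← pow_mul_aP_inv n hw.ne']
  field_simp

/-- For `n ≥ 1`, the function `w ↦ (n+1)² wⁿ/aₙ(w)²` is strictly decreasing
on `(1, ∞)`. -/
theorem strictAnti_ratio (n : ℕ) (hn : 1 ≤ n) :
    StrictAntiOn (fun w : ℝ => ((n : ℝ) + 1) ^ 2 * w ^ n / aP n w ^ 2)
      (Set.Ioi (1 : ℝ)) := by
  intro x hx y hy hxy
  have hx0 : 0 < x := lt_trans one_pos hx
  have hy0 : 0 < y := lt_trans one_pos hy
  have hH : 0 < aP n x * aP n x⁻¹ := mul_pos (aP_pos n hx0) (aP_pos n (inv_pos.2 hx0))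
  simp only [mul_div_assoc, pow_div_aP_sq n hx0, pow_div_aP_sq n hy0]
  gcongr ?_ * ?_⁻¹
  exact strictMonoOn_aP_mul_aP_inv hn hx hy hxy
end

section
/- Let α = 1 − e/(e − 1)². There exists a natural number N such that for every n ≥ N and every real w ≥ 1 + 1/n, F_n(w) ≥ (√α/(8√2)) · n / (√w (w − 1)), where F_n(w) = √(a_n(w) c_n(w) (a_n(w) c_n(w) − b_n(w)²)) / (2 w a_n(w)²). -/
/-!
Weighting `j ∈ {0, …, n}` by `w ^ j`, the quantity `(a c - b²) / a²` is the variance of a truncated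
geometric law, and it has the closed form `w / (w - 1)² - m² u / (u - 1)²` with `m = n + 1` and
`u = w ^ m`. Writing `w = exp (2x)`, the ratio of the two terms is `(m sinh x / sinh (m x))²`; the
hypothesis `w ≥ 1 + 1/n` gives `m x ≥ 1/2`, and convexity of `sinh` bounds that ratio by
`cosh (1/4)⁻² ≤ 16/17`, so `a c - b² ≥ w a² / (17 (w - 1)²)`. With `a c ≥ b²` and Chebyshev's sum
inequality `2 b ≥ n a`, this gives `F n w ≥ n / (4 √17 √w (w - 1))`, and `α ≤ 8/17` turns
`1 / (4 √17)` into the constant of the theorem.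
-/

open Finset Real

/-- `bP k w = ∑_{j=1}^k j w^j` -/
noncomputable def bP (k : ℕ) (w : ℝ) : ℝ := ∑ j ∈ range (k + 1), (j : ℝ) * w ^ j

/-- `cP k w = ∑_{j=1}^k j² w^j` -/
noncomputable def cP (k : ℕ) (w : ℝ) : ℝ := ∑ j ∈ range (k + 1), (j : ℝ) ^ 2 * w ^ j

/-- The first-intensity integrand for the naive model with `m = n`. -/
noncomputable def F (n : ℕ) (w : ℝ) : ℝ :=
  Real.sqrt (aP n w * cP n w * (aP n w * cP n w - bP n w ^ 2)) / (2 * w * aP n w ^ 2)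

namespace Real

lemma convexOn_sinh : ConvexOn ℝ (Set.Ici 0) sinh := by
  refine MonotoneOn.convexOn_of_deriv (convex_Ici 0) continuous_sinh.continuousOn
    differentiable_sinh.differentiableOn ?_
  rw [deriv_sinh, interior_Ici]
  intro x hx y _ hxy
  exact cosh_le_cosh.2 (by rw [abs_of_pos hx, abs_of_pos (lt_of_lt_of_le hx hxy)]; exact hxy)

lemma mul_sinh_le_sinh_mul {t x : ℝ} (ht : 1 ≤ t) (hx : 0 ≤ x) : t * sinh x ≤ sinh (t * x) := by
  have ht0 : 0 < t := by linarith
  have h := convexOn_sinh.2 (Set.mem_Ici.2 (mul_nonneg ht0.le hx)) Set.self_mem_Ici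
    (inv_nonneg.2 ht0.le) (sub_nonneg.2 (inv_le_one_of_one_le₀ ht)) (add_sub_cancel _ _)
  simp only [smul_eq_mul, mul_zero, add_zero, sinh_zero] at h
  rw [inv_mul_cancel_left₀ ht0.ne'] at h
  rwa [← le_inv_mul_iff₀ ht0]

lemma mul_sinh_mul_cosh_le_sinh_mul {t x : ℝ} (ht : 2 ≤ t) (hx : 0 ≤ x) :
    t * sinh x * cosh (t * x / 2) ≤ sinh (t * x) :=
  calc t * sinh x * cosh (t * x / 2) = 2 * (t / 2 * sinh x) * cosh (t / 2 * x) := by ring_nf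
    _ ≤ 2 * sinh (t / 2 * x) * cosh (t / 2 * x) := by
        gcongr
        exact mul_sinh_le_sinh_mul (by linarith) hx
    _ = sinh (t * x) := by rw [← sinh_two_mul]; ring_nf

lemma sq_mul_sinh_sq_le {t x : ℝ} (ht : 2 ≤ t) (hx : 0 ≤ x) (htx : 1 / 2 ≤ t * x) :
    17 * t ^ 2 * sinh x ^ 2 ≤ 16 * sinh (t * x) ^ 2 := by
  have hsinh : 0 ≤ t * sinh x := mul_nonneg (by linarith) (sinh_nonneg_iff.2 hx)
  have hcosh : 17 / 16 ≤ cosh (t * x / 2) ^ 2 := by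
    have h1 : (1 / 4 : ℝ) ≤ sinh (1 / 4) := self_le_sinh_iff.2 (by norm_num)
    have h2 : cosh (1 / 4) ≤ cosh (t * x / 2) :=
      cosh_le_cosh.2 (by rw [abs_of_pos (by norm_num), abs_of_nonneg (by positivity)]; linarith)
    nlinarith [cosh_sq' (1 / 4 : ℝ), cosh_pos (1 / 4 : ℝ)]
  have key := mul_sinh_mul_cosh_le_sinh_mul ht hx
  have hprod : 0 ≤ t * sinh x * cosh (t * x / 2) := mul_nonneg hsinh (cosh_pos _).le
  nlinarith [mul_le_mul key key hprod (hprod.trans key)]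

lemma exp_sub_one_eq_mul_sinh_half (x : ℝ) : exp x - 1 = 2 * exp (x / 2) * sinh (x / 2) :=
  calc exp x - 1 = exp (x / 2) * exp (x / 2) - exp (x / 2) * exp (-(x / 2)) := by
        rw [← exp_add, ← exp_add]; norm_num
    _ = 2 * exp (x / 2) * sinh (x / 2) := by rw [sinh_eq]; ring

end Real

lemma sq_mul_exp_mul_sub_one_sq_le {t x : ℝ} (ht : 2 ≤ t) (hx : 0 ≤ x) (htx : 1 ≤ t * x) :
    17 * t ^ 2 * exp (t * x) * (exp x - 1) ^ 2 ≤ 16 * exp x * (exp (t * x) - 1) ^ 2 := by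
  have h := sq_mul_sinh_sq_le ht (by positivity) (by linarith : 1 / 2 ≤ t * (x / 2))
  have hsq : ∀ y, exp y = exp (y / 2) ^ 2 := fun y => by rw [← exp_nat_mul]; ring_nf
  rw [exp_sub_one_eq_mul_sinh_half x, exp_sub_one_eq_mul_sinh_half (t * x), hsq x, hsq (t * x),
    mul_div_assoc]
  have : 0 ≤ 4 * exp (x / 2) ^ 2 * exp (t * (x / 2)) ^ 2 := by positivity
  nlinarith [mul_le_mul_of_nonneg_left h this]

lemma one_lt_of_one_add_inv_le {n : ℕ} {w : ℝ} (hn : n ≠ 0) (hw : 1 + 1 / n ≤ w) : 1 < w := by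
  have : (0 : ℝ) < 1 / n := one_div_pos.2 (Nat.cast_pos.2 (Nat.pos_of_ne_zero hn))
  linarith

lemma one_le_mul_log_of_one_add_inv_le {n : ℕ} {w : ℝ} (hn : n ≠ 0) (hw : 1 + 1 / n ≤ w) :
    1 ≤ (n + 1) * log w := by
  have hn0 : (0 : ℝ) < n := Nat.cast_pos.2 (Nat.pos_of_ne_zero hn)
  have hw0 : 0 < w := by linarith [one_lt_of_one_add_inv_le hn hw]
  have hnw : 1 ≤ n * (w - 1) := by
    rw [← div_le_iff₀' hn0]
    linarith
  calc 1 ≤ (n + 1) * (w - 1) / w := by rw [le_div_iff₀ hw0]; linarith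
    _ = (n + 1) * (1 - w⁻¹) := by field_simp
    _ ≤ (n + 1) * log w := by gcongr; exact one_sub_inv_le_log_of_pos hw0

lemma sq_mul_pow_mul_sub_one_sq_le {n : ℕ} {w : ℝ} (hn : n ≠ 0) (hw : 1 + 1 / n ≤ w) :
    17 * (n + 1) ^ 2 * w ^ (n + 1) * (w - 1) ^ 2 ≤ 16 * w * (w ^ (n + 1) - 1) ^ 2 := by
  have hn1 : (1 : ℝ) ≤ n := Nat.one_le_cast.2 (Nat.pos_of_ne_zero hn)
  have hw1 := one_lt_of_one_add_inv_le hn hw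
  have hw0 : 0 < w := by linarith
  have hpow : exp ((n + 1) * log w) = w ^ (n + 1) := by
    rw [← Nat.cast_add_one, exp_nat_mul, exp_log hw0]
  have h := sq_mul_exp_mul_sub_one_sq_le (by linarith) (log_nonneg hw1.le)
    (one_le_mul_log_of_one_add_inv_le hn hw)
  rwa [hpow, exp_log hw0] at h

lemma aP_mul_sub_one (n : ℕ) (w : ℝ) : aP n w * (w - 1) = w ^ (n + 1) - 1 :=
  geom_sum_mul w (n + 1)

lemma bP_mul_sub_one_sq (n : ℕ) (w : ℝ) :
    bP n w * (w - 1) ^ 2 = n * w ^ (n + 2) - (n + 1) * w ^ (n + 1) + w := by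
  induction n with
  | zero => simp [bP]
  | succ n ih =>
    rw [bP, sum_range_succ, ← bP, add_mul, ih]
    push_cast
    ring

lemma cP_mul_sub_one_cube (n : ℕ) (w : ℝ) :
    cP n w * (w - 1) ^ 3 = n ^ 2 * w ^ (n + 3) - (2 * n ^ 2 + 2 * n - 1) * w ^ (n + 2)
      + (n + 1) ^ 2 * w ^ (n + 1) - w * (w + 1) := by
  induction n with
  | zero => simp only [cP, zero_add, range_one, sum_singleton]; ring
  | succ n ih =>
    rw [cP, sum_range_succ, ← cP, add_mul, ih]
    push_cast
    ring

lemma aP_mul_cP_sub_bP_sq_mul_sub_one_pow_four (n : ℕ) (w : ℝ) :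
    (aP n w * cP n w - bP n w ^ 2) * (w - 1) ^ 4
      = w * (w ^ (n + 1) - 1) ^ 2 - (n + 1) ^ 2 * w ^ (n + 1) * (w - 1) ^ 2 := by
  calc (aP n w * cP n w - bP n w ^ 2) * (w - 1) ^ 4
      = aP n w * (w - 1) * (cP n w * (w - 1) ^ 3) - (bP n w * (w - 1) ^ 2) ^ 2 := by ring
    _ = _ := by
      rw [aP_mul_sub_one, bP_mul_sub_one_sq, cP_mul_sub_one_cube]
      ring

lemma mul_aP_le_two_mul_bP (n : ℕ) {w : ℝ} (hw : 1 ≤ w) : n * aP n w ≤ 2 * bP n w := by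
  have h := ((Nat.mono_cast.monovary (pow_right_mono₀ hw)).monovaryOn
    (range (n + 1))).sum_mul_sum_le_card_mul_sum
  have gauss : ∑ j ∈ range (n + 1), (j : ℝ) = (n + 1) * n / 2 := by
    rw [eq_div_iff two_ne_zero, ← Nat.cast_sum]
    have h := sum_range_id_mul_two (n + 1)
    rw [Nat.add_sub_cancel] at h
    exact_mod_cast h
  rw [card_range, gauss] at h
  rw [aP, bP]
  push_cast at h
  nlinarith

lemma mul_aP_sq_le_mul_aP_mul_cP_sub_bP_sq {n : ℕ} {w : ℝ} (hn : n ≠ 0) (hw : 1 + 1 / n ≤ w) :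
    w * aP n w ^ 2 ≤ 17 * (w - 1) ^ 2 * (aP n w * cP n w - bP n w ^ 2) := by
  have hw1 : 0 < w - 1 := by linarith [one_lt_of_one_add_inv_le hn hw]
  have h := sq_mul_pow_mul_sub_one_sq_le hn hw
  have hD := aP_mul_cP_sub_bP_sq_mul_sub_one_pow_four n w
  have ha := aP_mul_sub_one n w
  refine le_of_mul_le_mul_right ?_ (pow_pos hw1 2)
  calc w * aP n w ^ 2 * (w - 1) ^ 2 = w * (w ^ (n + 1) - 1) ^ 2 := by rw [← ha]; ring
    _ ≤ 17 * ((aP n w * cP n w - bP n w ^ 2) * (w - 1) ^ 4) := by rw [hD]; linarith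
    _ = _ := by ring

lemma le_F_of_one_add_inv_le {n : ℕ} {w : ℝ} (hn : n ≠ 0) (hw : 1 + 1 / n ≤ w) :
    1 / (4 * √17) * (n / (√w * (w - 1))) ≤ F n w := by
  have hw1 := one_lt_of_one_add_inv_le hn hw
  set a := aP n w
  set b := bP n w
  set D := a * cP n w - b ^ 2 with hD
  have ha : 0 < a := sum_pos (fun j _ => pow_pos (by linarith) j) nonempty_range_add_one
  have hvar := mul_aP_sq_le_mul_aP_mul_cP_sub_bP_sq hn hw
  have hD0 : 0 ≤ D := by nlinarith
  have hb : n * a ≤ 2 * b := mul_aP_le_two_mul_bP n hw1.le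
  have hb0 : 0 ≤ b := by nlinarith [Nat.cast_nonneg (α := ℝ) n]
  have hsqrtD : √w * a ≤ √17 * (w - 1) * √D := by
    have h := Real.sqrt_le_sqrt hvar
    rwa [Real.sqrt_mul (by linarith), Real.sqrt_sq ha.le, Real.sqrt_mul (by positivity),
      Real.sqrt_mul (by norm_num), Real.sqrt_sq (by linarith)] at h
  have hnum : b * √D ≤ √(a * cP n w * D) := by
    rw [← Real.sqrt_sq hb0, ← Real.sqrt_mul (sq_nonneg b)]
    exact Real.sqrt_le_sqrt (mul_le_mul_of_nonneg_right (by linarith) hD0)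
  have hsw : √w * √w = w := Real.mul_self_sqrt (by linarith)
  rw [F, ← hD, one_div_mul_eq_div, div_div, div_le_div_iff₀ (by positivity) (by positivity)]
  calc n * (2 * w * a ^ 2) = 2 * (n * a) * √w * (√w * a) := by
        linear_combination (-2 * n * a ^ 2) * hsw
    _ ≤ 2 * (2 * b) * √w * (√17 * (w - 1) * √D) := by gcongr
    _ = 4 * √17 * (√w * (w - 1)) * (b * √D) := by ring
    _ ≤ 4 * √17 * (√w * (w - 1)) * √(a * cP n w * D) := by gcongr
    _ = _ := by ring

lemma sqrt_one_sub_exp_one_div_le :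
    √(1 - exp 1 / (exp 1 - 1) ^ 2) / (8 * √2) ≤ 1 / (4 * √17) := by
  have he1 := exp_one_gt_d9
  have he2 := exp_one_lt_d9
  have hα : 17 * (1 - exp 1 / (exp 1 - 1) ^ 2) ≤ 8 := by
    rw [mul_sub, mul_one, mul_div_assoc', sub_le_iff_le_add, ← sub_le_iff_le_add',
      le_div_iff₀ (by nlinarith)]
    nlinarith
  rw [div_le_div_iff₀ (by positivity) (by positivity), one_mul, mul_comm 4, ← mul_assoc,
    ← Real.sqrt_mul' _ (by norm_num)]
  calc √((1 - exp 1 / (exp 1 - 1) ^ 2) * 17) * 4 ≤ √8 * 4 := by gcongr; linarith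
    _ = 8 * √2 := by
      rw [show (8 : ℝ) = 2 ^ 2 * 2 by norm_num, Real.sqrt_mul (by norm_num),
        Real.sqrt_sq (by norm_num)]
      ring

/-- With `α = 1 − e/(e−1)²`, for all sufficiently large `n` and all
`w ≥ 1 + 1/n`, `Fₙ(w) ≥ (√α/(8√2)) n/(√w (w − 1))`. -/
theorem F_lower_bound :
    ∃ N : ℕ, ∀ n : ℕ, N ≤ n → ∀ w : ℝ, 1 + 1 / (n : ℝ) ≤ w →
      (Real.sqrt (1 - Real.exp 1 / (Real.exp 1 - 1) ^ 2) / (8 * Real.sqrt 2)) *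
          ((n : ℝ) / (Real.sqrt w * (w - 1))) ≤ F n w := by
  refine ⟨1, fun n hn w hw => ?_⟩
  have hn0 : n ≠ 0 := by omega
  have hw1 := one_lt_of_one_add_inv_le hn0 hw
  calc _ ≤ 1 / (4 * √17) * (n / (√w * (w - 1))) :=
        mul_le_mul_of_nonneg_right sqrt_one_sub_exp_one_div_le
          (div_nonneg n.cast_nonneg (mul_nonneg (Real.sqrt_nonneg w) (by linarith)))
    _ ≤ F n w := le_F_of_one_add_inv_le hn0 hw
end

section
/- Define F_n(w) = √(a_n(w) c_n(w) (a_n(w) c_n(w) − b_n(w)²)) / (2 w a_n(w)²). Then lim_{n→∞} (1/(n log n)) ∫_{1 − 1/n}^{1 + 1/n} F_n(w) dw = 0. -/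
open Finset Filter MeasureTheory

/-!
On the middle interval `w ≥ 1/2`, and there `F n w ≤ a c / (2 w a²) = c / (2 w a) ≤ n²`, because
`√(ac (ac - b²)) ≤ ac` and `c ≤ n² a` termwise. The interval has length `2/n`, so the integral is
at most `2n`, which is `o(n log n)`.
-/

lemma one_le_aP (k : ℕ) {w : ℝ} (hw : 0 ≤ w) : 1 ≤ aP k w := by
  simpa [aP] using single_le_sum (f := fun j => w ^ j) (fun j _ => pow_nonneg hw j)
    (mem_range.2 k.succ_pos)

lemma cP_nonneg (k : ℕ) {w : ℝ} (hw : 0 ≤ w) : 0 ≤ cP k w :=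
  sum_nonneg fun j _ => mul_nonneg (sq_nonneg _) (pow_nonneg hw j)

lemma cP_le_sq_mul_aP (k : ℕ) {w : ℝ} (hw : 0 ≤ w) : cP k w ≤ (k : ℝ) ^ 2 * aP k w := by
  rw [aP, cP, mul_sum]
  refine sum_le_sum fun j hj => mul_le_mul_of_nonneg_right ?_ (pow_nonneg hw j)
  have hjk : (j : ℝ) ≤ k := by exact_mod_cast Nat.lt_succ_iff.mp (mem_range.mp hj)
  exact pow_le_pow_left₀ j.cast_nonneg hjk 2

lemma Real.sqrt_mul_sub_sq_le {x : ℝ} (hx : 0 ≤ x) (y : ℝ) : √(x * (x - y ^ 2)) ≤ x :=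
  (Real.sqrt_le_left hx).2 (by nlinarith [sq_nonneg y])

lemma F_nonneg (n : ℕ) {w : ℝ} (hw : 0 ≤ w) : 0 ≤ F n w :=
  div_nonneg (Real.sqrt_nonneg _) (by positivity)

lemma F_le_div (n : ℕ) {w : ℝ} (hw : 0 < w) : F n w ≤ (n : ℝ) ^ 2 / (2 * w) := by
  have ha := one_le_aP n hw.le
  have hac : 0 ≤ aP n w * cP n w := mul_nonneg (by linarith) (cP_nonneg n hw.le)
  calc F n w ≤ aP n w * cP n w / (2 * w * aP n w ^ 2) :=
        div_le_div_of_nonneg_right (Real.sqrt_mul_sub_sq_le hac _) (by positivity)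
    _ = cP n w / (2 * w * aP n w) := by field_simp
    _ ≤ (n : ℝ) ^ 2 / (2 * w) := by
        rw [div_le_div_iff₀ (by positivity) (by positivity)]
        nlinarith [cP_le_sq_mul_aP n hw.le]

lemma norm_F_le_sq (n : ℕ) {w : ℝ} (hw : 1 / 2 ≤ w) : ‖F n w‖ ≤ (n : ℝ) ^ 2 := by
  have hw0 : 0 < w := by linarith
  rw [Real.norm_of_nonneg (F_nonneg n hw0.le)]
  refine (F_le_div n hw0).trans (div_le_self (sq_nonneg _) ?_)
  linarith

lemma norm_integral_F_middle_le {n : ℕ} (hn : 2 ≤ n) :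
    ‖∫ w in (1 - 1 / (n : ℝ))..(1 + 1 / (n : ℝ)), F n w‖ ≤ 2 * n := by
  have hn' : (2 : ℝ) ≤ n := by exact_mod_cast hn
  have hinv : 0 < 1 / (n : ℝ) ∧ 1 / (n : ℝ) ≤ 1 / 2 :=
    ⟨by positivity, one_div_le_one_div_of_le two_pos hn'⟩
  have hbound := intervalIntegral.norm_integral_le_of_norm_le_const
    (a := 1 - 1 / (n : ℝ)) (b := 1 + 1 / (n : ℝ)) (f := F n) (C := (n : ℝ) ^ 2)
    fun w hw => norm_F_le_sq n (by
      rw [Set.uIoc_of_le (by linarith)] at hw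
      linarith [hw.1])
  have hlen : |(1 + 1 / (n : ℝ)) - (1 - 1 / n)| = 2 / n := by
    rw [abs_of_nonneg (by linarith)]; ring
  rw [hlen] at hbound
  exact hbound.trans_eq (by field_simp)

/-- The contribution of the middle interval `[1 − 1/n, 1 + 1/n]` is negligible
at the scale `n log n`. -/
theorem middle_interval_negligible :
    Tendsto (fun n : ℕ =>
        (1 / ((n : ℝ) * Real.log n)) *
          ∫ w in (1 - 1 / (n : ℝ))..(1 + 1 / (n : ℝ)), F n w)
      atTop (nhds 0) := by
  have hlim : Tendsto (fun n : ℕ => 2 / Real.log n) atTop (nhds 0) :=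
    tendsto_const_nhds.div_atTop (Real.tendsto_log_atTop.comp tendsto_natCast_atTop_atTop)
  refine squeeze_zero_norm' ?_ hlim
  filter_upwards [eventually_ge_atTop 2] with n hn
  have hn' : (2 : ℝ) ≤ n := by exact_mod_cast hn
  have hlog : 0 < Real.log n := Real.log_pos (by linarith)
  calc ‖(1 / ((n : ℝ) * Real.log n)) * ∫ w in (1 - 1 / (n : ℝ))..(1 + 1 / (n : ℝ)), F n w‖
      ≤ 1 / ((n : ℝ) * Real.log n) * (2 * n) := by
        rw [norm_mul, Real.norm_of_nonneg (by positivity)]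
        gcongr
        exact norm_integral_F_middle_le hn
    _ = 2 / Real.log n := by field_simp
end
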